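/- arXiv:0804.1415 — 3 statements merged into one kernel-verified Lean document; each statement's English description precedes it below -/
import Mathlib

section
/- For every u ∈ [0,1] one has G(u) ≥ (μ/2) u. -/
/-!
On `[0, 1]` the convex function `t ↦ exp (-t)` lies below its chord `1 - (1 - e⁻¹) t ≤ 1 - t / 2`.
Applied pointwise to `t = u ξ` and integrated, this gives `E[exp (-u ξ)] ≤ 1 - u μ / 2`, and
`-log x ≥ 1 - x` turns it into `G u ≥ u μ / 2`.
-/

open MeasureTheory ProbabilityTheory Real

lemma Real.exp_neg_le_one_sub_half {t : ℝ} (h0 : 0 ≤ t) (h1 : t ≤ 1) :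
    exp (-t) ≤ 1 - t / 2 := by
  have hchord := convexOn_exp.2 (Set.mem_univ 0) (Set.mem_univ (-1))
    (sub_nonneg.2 h1) h0 (sub_add_cancel 1 t)
  simp only [smul_eq_mul, mul_zero, mul_neg, mul_one, zero_add, exp_zero] at hchord
  nlinarith [exp_neg_one_lt_half]

section

variable {Ω : Type*} [MeasurableSpace Ω] {P : Measure Ω} {ξ : Ω → ℝ}

lemma integrable_exp_neg_mul_of_nonneg [IsFiniteMeasure P] (hξm : AEStronglyMeasurable ξ P)
    (hξ : ∀ᵐ ω ∂P, 0 ≤ ξ ω) {u : ℝ} (hu : 0 ≤ u) :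
    Integrable (fun ω => exp (-u * ξ ω)) P := by
  refine .of_bound (by fun_prop) 1 ?_
  filter_upwards [hξ] with ω hω
  rw [norm_of_nonneg (exp_pos _).le, exp_le_one_iff]
  nlinarith

lemma integral_exp_neg_mul_le_one_sub_half [IsProbabilityMeasure P]
    (hξm : AEStronglyMeasurable ξ P) (hξ : ∀ᵐ ω ∂P, 0 ≤ ξ ω ∧ ξ ω ≤ 1)
    {u : ℝ} (hu0 : 0 ≤ u) (hu1 : u ≤ 1) :
    ∫ ω, exp (-u * ξ ω) ∂P ≤ 1 - u * (∫ ω, ξ ω ∂P) / 2 := by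
  have hξint : Integrable ξ P := .of_bound hξm 1 <| by
    filter_upwards [hξ] with ω hω
    rw [norm_of_nonneg hω.1]
    exact hω.2
  have hhalf : Integrable (fun ω => u * ξ ω / 2) P := (hξint.const_mul u).div_const 2
  calc ∫ ω, exp (-u * ξ ω) ∂P
      ≤ ∫ ω, (1 - u * ξ ω / 2) ∂P := by
        refine integral_mono_ae (integrable_exp_neg_mul_of_nonneg hξm (hξ.mono fun _ h => h.1) hu0)
          ((integrable_const 1).sub hhalf) ?_
        filter_upwards [hξ] with ω hω
        rw [neg_mul]
        exact exp_neg_le_one_sub_half (mul_nonneg hu0 hω.1) (by nlinarith)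
    _ = 1 - u * (∫ ω, ξ ω ∂P) / 2 := by
        rw [integral_sub (integrable_const 1) hhalf, integral_div, integral_const_mul]
        simp

end

theorem G_lower_bound_on_unit_interval_general
    {Ω : Type*} [MeasurableSpace Ω] (P : Measure Ω) [IsProbabilityMeasure P]
    (ξ : Ω → ℝ) (hmeas : Measurable ξ)
    (hξ : ∀ᵐ ω ∂P, 0 ≤ ξ ω ∧ ξ ω ≤ 1)
    (μ : ℝ) (hμ : μ = ∫ ω, ξ ω ∂P)
    (G : ℝ → ℝ) (hG : ∀ u, G u = -Real.log (∫ ω, Real.exp (-u * ξ ω) ∂P)) :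
    ∀ u ∈ Set.Icc (0 : ℝ) 1, μ / 2 * u ≤ G u := by
  rintro u ⟨hu0, hu1⟩
  have hbound := integral_exp_neg_mul_le_one_sub_half hmeas.aestronglyMeasurable hξ hu0 hu1
  have hpos : 0 < ∫ ω, exp (-u * ξ ω) ∂P := integral_exp_pos <|
    integrable_exp_neg_mul_of_nonneg hmeas.aestronglyMeasurable (hξ.mono fun _ h => h.1) hu0
  rw [hG, hμ]
  linarith [log_le_sub_one_of_pos hpos]

/-- For `G(u) = -ln E[exp(-u ξ)]` with `0 ≤ ξ ≤ 1` a.s. and `μ = E ξ > 0`,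
one has `G(u) ≥ (μ/2) u` for all `u ∈ [0,1]`. -/
theorem G_lower_bound_on_unit_interval
    {Ω : Type*} [MeasurableSpace Ω] (P : Measure Ω) [IsProbabilityMeasure P]
    (ξ : Ω → ℝ) (hmeas : Measurable ξ)
    (hξ : ∀ᵐ ω ∂P, 0 ≤ ξ ω ∧ ξ ω ≤ 1)
    (p : ℝ) (hp : p = (P {ω | ξ ω = 0}).toReal) (hp0 : 0 < p) (hp1 : p < 1)
    (μ : ℝ) (hμ : μ = ∫ ω, ξ ω ∂P) (hμpos : 0 < μ)
    (ν : ℝ) (hν : ν = Real.log (1 / p))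
    (G : ℝ → ℝ) (hG : ∀ u, G u = -Real.log (∫ ω, Real.exp (-u * ξ ω) ∂P)) :
    ∀ u ∈ Set.Icc (0 : ℝ) 1, μ / 2 * u ≤ G u :=
  G_lower_bound_on_unit_interval_general P ξ hmeas hξ μ hμ G hG
end

section
/- The function h ↦ Γ(h; φ) is differentiable on (0,∞) with derivative Γ′(h; φ) = ∫_{ℝ^d} |φ(x)|² G′(h |φ(x)|²) dx, where G′(u) = E[ξ exp(−u ξ)]/E[exp(−u ξ)]; moreover 0 < Γ′(h; φ) ≤ (μ/p) ‖φ‖₂² for every h > 0, and Γ′(h; φ) → μ ‖φ‖₂² as h → 0⁺. -/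
/-!
`G(u) = -cgf ξ (-u)`, so `G'(u)` is the mean of `ξ` under the law tilted by `e^{-uξ}`. This
tilted mean is continuous, positive, equal to `μ` at `u = 0`, and at most `μ / p` for `u ≥ 0`,
since then `E[ξ e^{-uξ}] ≤ μ` and `E[e^{-uξ}] ≥ P(ξ = 0)`. With `G(0) = 0` the mean value theorem
gives `|G(u)| ≤ (μ/p) u`, so `G(h|φ|²)` and `|φ|² G'(h|φ|²)` are dominated by multiples of
`|φ|²`: differentiation under the integral sign and dominated convergence do the rest.
-/

open MeasureTheory ProbabilityTheory Real Filter Topology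

section IntegralCompMul

variable {α : Type*} {f : α → ℝ} {g g' : ℝ → ℝ} {C : ℝ}

lemma norm_le_mul_of_hasDerivAt_of_map_zero (hg : ∀ u, HasDerivAt g (g' u) u)
    (hg0 : g 0 = 0) (hC : ∀ u, 0 ≤ u → ‖g' u‖ ≤ C) {u : ℝ} (hu : 0 ≤ u) :
    ‖g u‖ ≤ C * u := by
  simpa [hg0] using norm_image_sub_le_of_norm_deriv_le_segment'
    (fun v _ => (hg v).hasDerivWithinAt) (fun v hv => hC v hv.1) u ⟨hu, le_rfl⟩

lemma norm_mul_comp_mul_le (hf0 : 0 ≤ f) (hC : ∀ u, 0 ≤ u → ‖g' u‖ ≤ C) {t : ℝ}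
    (ht : 0 ≤ t) (x : α) : ‖f x * g' (t * f x)‖ ≤ C * f x := by
  rw [norm_mul, Real.norm_of_nonneg (hf0 x), mul_comm]
  exact mul_le_mul_of_nonneg_right (hC _ (mul_nonneg ht (hf0 x))) (hf0 x)

variable [MeasurableSpace α] {m : Measure α}

lemma integral_mul_pos_of_integral_pos {w : α → ℝ} (hf0 : 0 ≤ᵐ[m] f) (hf : 0 < ∫ x, f x ∂m)
    (hw : ∀ x, 0 < w x) (hfw : Integrable (fun x => f x * w x) m) :
    0 < ∫ x, f x * w x ∂m := by
  have hfw0 : 0 ≤ᵐ[m] fun x => f x * w x := by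
    filter_upwards [hf0] with x hx using mul_nonneg hx (hw x).le
  have hsupp : Function.support (fun x => f x * w x) = Function.support f := by
    ext x; simp [(hw x).ne']
  rw [integral_pos_iff_support_of_nonneg_ae hf0 (Integrable.of_integral_ne_zero hf.ne')] at hf
  rwa [integral_pos_iff_support_of_nonneg_ae hfw0 hfw, hsupp]

lemma integrable_mul_comp_mul (hf : Integrable f m) (hf0 : 0 ≤ f) (hg' : Continuous g')
    (hC : ∀ u, 0 ≤ u → ‖g' u‖ ≤ C) {t : ℝ} (ht : 0 ≤ t) :
    Integrable (fun x => f x * g' (t * f x)) m :=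
  (hf.const_mul C).mono'
    (hf.aestronglyMeasurable.mul
      (hg'.comp_aestronglyMeasurable (hf.aestronglyMeasurable.const_mul t)))
    (ae_of_all _ (norm_mul_comp_mul_le hf0 hC ht))

lemma hasDerivAt_integral_comp_mul (hf : Integrable f m) (hf0 : 0 ≤ f)
    (hg : ∀ u, HasDerivAt g (g' u) u) (hg' : Continuous g') (hg0 : g 0 = 0)
    (hC : ∀ u, 0 ≤ u → ‖g' u‖ ≤ C) {h : ℝ} (hh : 0 < h) :
    HasDerivAt (fun t => ∫ x, g (t * f x) ∂m) (∫ x, f x * g' (h * f x) ∂m) h := by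
  have hg_cont : Continuous g := continuous_iff_continuousAt.2 fun u => (hg u).continuousAt
  have hF_meas (t : ℝ) : AEStronglyMeasurable (fun x => g (t * f x)) m :=
    hg_cont.comp_aestronglyMeasurable (hf.aestronglyMeasurable.const_mul t)
  have hF_int : Integrable (fun x => g (h * f x)) m := by
    refine (hf.const_mul (C * h)).mono' (hF_meas h) (ae_of_all _ fun x => ?_)
    calc ‖g (h * f x)‖ ≤ C * (h * f x) :=
          norm_le_mul_of_hasDerivAt_of_map_zero hg hg0 hC (mul_nonneg hh.le (hf0 x))
      _ = C * h * f x := by ring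
  refine (hasDerivAt_integral_of_dominated_loc_of_deriv_le (Ioi_mem_nhds hh)
    (Eventually.of_forall hF_meas) hF_int
    (integrable_mul_comp_mul hf hf0 hg' hC hh.le).aestronglyMeasurable
    (bound := fun x => C * f x)
    (ae_of_all _ fun x t ht => norm_mul_comp_mul_le hf0 hC (le_of_lt ht) x)
    (hf.const_mul C) (ae_of_all _ fun x t _ => ?_)).2
  exact ((hg (t * f x)).comp t (hasDerivAt_mul_const (f x))).congr_deriv (mul_comm _ _)

lemma tendsto_integral_mul_comp_mul (hf : Integrable f m) (hf0 : 0 ≤ f) (hg' : Continuous g')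
    (hC : ∀ u, 0 ≤ u → ‖g' u‖ ≤ C) :
    Tendsto (fun t => ∫ x, f x * g' (t * f x) ∂m) (𝓝[≥] 0)
      (𝓝 (g' 0 * ∫ x, f x ∂m)) := by
  rw [mul_comm, ← integral_mul_const]
  refine tendsto_integral_filter_of_dominated_convergence (fun x => C * f x)
    ?_ ?_ (hf.const_mul C) (ae_of_all _ fun x => ?_)
  · filter_upwards [self_mem_nhdsWithin] with t (ht : 0 ≤ t)
      using (integrable_mul_comp_mul hf hf0 hg' hC ht).aestronglyMeasurable
  · filter_upwards [self_mem_nhdsWithin] with t ht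
      using ae_of_all _ (norm_mul_comp_mul_le hf0 hC ht)
  · exact ((continuous_const.mul (hg'.comp (continuous_id.mul continuous_const))).tendsto' 0 _
      (by simp)).mono_left nhdsWithin_le_nhds

lemma integral_mul_comp_mul_le (hf : Integrable f m) (hf0 : 0 ≤ f) (hg' : Continuous g')
    (hC : ∀ u, 0 ≤ u → ‖g' u‖ ≤ C) {t : ℝ} (ht : 0 ≤ t) :
    ∫ x, f x * g' (t * f x) ∂m ≤ C * ∫ x, f x ∂m := by
  rw [← integral_const_mul]
  exact integral_mono (integrable_mul_comp_mul hf hf0 hg' hC ht) (hf.const_mul C)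
    fun x => (Real.le_norm_self _).trans (norm_mul_comp_mul_le hf0 hC ht x)

end IntegralCompMul

section TiltedMean

variable {Ω : Type*} [MeasurableSpace Ω] {P : Measure Ω} {X : Ω → ℝ} {t : ℝ}

/-- The mean of `X` under the exponentially tilted law `P.tilted (t * X ·)`. -/
noncomputable def tiltedMean (X : Ω → ℝ) (P : Measure Ω) (t : ℝ) : ℝ :=
  P[fun ω => X ω * exp (t * X ω)] / mgf X P t

lemma mem_interior_integrableExpSet_of_forall (hX : ∀ t, Integrable (fun ω => exp (t * X ω)) P)
    (t : ℝ) : t ∈ interior (integrableExpSet X P) := by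
  have : integrableExpSet X P = Set.univ := Set.eq_univ_of_forall hX
  simp [this]

lemma integrable_mul_exp_mul (hX : ∀ t, Integrable (fun ω => exp (t * X ω)) P) (t : ℝ) :
    Integrable (fun ω => X ω * exp (t * X ω)) P := by
  simpa using integrable_pow_mul_exp_of_mem_interior_integrableExpSet
    (mem_interior_integrableExpSet_of_forall hX t) 1

lemma hasDerivAt_cgf [NeZero P] (h : t ∈ interior (integrableExpSet X P)) :
    HasDerivAt (cgf X P) (tiltedMean X P t) t :=
  (hasDerivAt_mgf h).log
    (mgf_pos' (NeZero.ne P) (interior_subset (s := integrableExpSet X P) h)).ne'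

lemma continuous_tiltedMean [NeZero P] (hX : ∀ t, Integrable (fun ω => exp (t * X ω)) P) :
    Continuous (tiltedMean X P) := by
  have hnum : Continuous fun t => P[fun ω => X ω * exp (t * X ω)] :=
    continuous_iff_continuousAt.2 fun t => by
      simpa using (hasDerivAt_integral_pow_mul_exp_real
        (mem_interior_integrableExpSet_of_forall hX t) 1).continuousAt
  exact hnum.div (continuous_mgf hX) fun t => (mgf_pos' (NeZero.ne P) (hX t)).ne'

lemma tiltedMean_zero [IsProbabilityMeasure P] : tiltedMean X P 0 = P[X] := by
  simp [tiltedMean]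

lemma tiltedMean_pos [NeZero P] (hX : ∀ t, Integrable (fun ω => exp (t * X ω)) P)
    (hX0 : 0 ≤ᵐ[P] X) (hmean : 0 < P[X]) : 0 < tiltedMean X P t :=
  div_pos (integral_mul_pos_of_integral_pos hX0 hmean (fun _ => exp_pos _) (integrable_mul_exp_mul hX t))
    (mgf_pos' (NeZero.ne P) (hX t))

lemma measureReal_setOf_eq_zero_le_mgf (hX : AEMeasurable X P)
    (h : Integrable (fun ω => exp (t * X ω)) P) : P.real {ω | X ω = 0} ≤ mgf X P t := by
  have hs : NullMeasurableSet {ω | X ω = 0} P := hX.nullMeasurable (measurableSet_singleton 0)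
  calc P.real {ω | X ω = 0} = ∫ ω in {ω | X ω = 0}, exp (t * X ω) ∂P := by
        rw [setIntegral_congr_fun₀ hs (g := fun _ => (1 : ℝ))
          fun ω (hω : X ω = 0) => by simp [hω]]
        simp
    _ ≤ mgf X P t := setIntegral_le_integral h (ae_of_all _ fun _ => (exp_pos _).le)

lemma tiltedMean_le_integral_div_measureReal (hX : ∀ t, Integrable (fun ω => exp (t * X ω)) P)
    (hX0 : 0 ≤ᵐ[P] X) (hP : 0 < P.real {ω | X ω = 0}) (ht : t ≤ 0) :
    tiltedMean X P t ≤ P[X] / P.real {ω | X ω = 0} := by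
  have hnum : P[fun ω => X ω * exp (t * X ω)] ≤ P[X] := by
    refine integral_mono_ae (integrable_mul_exp_mul hX t)
      (integrable_of_mem_interior_integrableExpSet (mem_interior_integrableExpSet_of_forall hX 0))
      ?_
    filter_upwards [hX0] with ω hω
    exact mul_le_of_le_one_right hω (exp_le_one_iff.2 (mul_nonpos_of_nonpos_of_nonneg ht hω))
  exact div_le_div₀ (integral_nonneg_of_ae hX0) hnum hP <| measureReal_setOf_eq_zero_le_mgf
    (aemeasurable_of_mem_interior_integrableExpSet (mem_interior_integrableExpSet_of_forall hX 0))
    (hX t)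

end TiltedMean

theorem Gamma_deriv_properties_general
    {Ω : Type*} [MeasurableSpace Ω] (P : Measure Ω) [IsProbabilityMeasure P]
    (ξ : Ω → ℝ) (hmeas : Measurable ξ)
    (hξ : ∀ᵐ ω ∂P, 0 ≤ ξ ω ∧ ξ ω ≤ 1)
    (p : ℝ) (hp : p = (P {ω | ξ ω = 0}).toReal) (hp0 : 0 < p)
    (μ : ℝ) (hμ : μ = ∫ ω, ξ ω ∂P) (hμpos : 0 < μ)
    (G : ℝ → ℝ) (hG : ∀ u, G u = -Real.log (∫ ω, Real.exp (-u * ξ ω) ∂P))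
    (G' : ℝ → ℝ)
    (hG' : ∀ u, G' u = (∫ ω, ξ ω * Real.exp (-u * ξ ω) ∂P) /
        (∫ ω, Real.exp (-u * ξ ω) ∂P))
    (d : ℕ)
    (φ : (Fin d → ℝ) → (Fin d → ℝ))
    (hφint : Integrable (fun x => ∑ k, (φ x k) ^ 2))
    (hφpos : 0 < ∫ x, ∑ k, (φ x k) ^ 2)
    (Γ : ℝ → ℝ) (hΓ : ∀ h, Γ h = ∫ x, G (h * ∑ k, (φ x k) ^ 2))
    (Γ' : ℝ → ℝ)
    (hΓ' : ∀ h, Γ' h = ∫ x, (∑ k, (φ x k) ^ 2) * G' (h * ∑ k, (φ x k) ^ 2)) :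
    (∀ h, 0 < h → HasDerivAt Γ (Γ' h) h ∧ 0 < Γ' h ∧
        Γ' h ≤ μ / p * ∫ x, ∑ k, (φ x k) ^ 2) ∧
      Tendsto Γ' (𝓝[>] (0 : ℝ)) (𝓝 (μ * ∫ x, ∑ k, (φ x k) ^ 2)) := by
  obtain rfl : G = fun u => -cgf ξ P (-u) := funext hG
  obtain rfl : G' = fun u => tiltedMean ξ P (-u) := funext hG'
  subst hμ hp
  have hf0 : 0 ≤ fun x => ∑ k, φ x k ^ 2 := fun x => by positivity
  have hξ0 : 0 ≤ᵐ[P] ξ := hξ.mono fun _ h => h.1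
  have hexp (t : ℝ) : Integrable (fun ω => exp (t * ξ ω)) P :=
    integrable_exp_mul_of_mem_Icc hmeas.aemeasurable hξ
  have hderiv (u : ℝ) : HasDerivAt (fun u => -cgf ξ P (-u)) (tiltedMean ξ P (-u)) u :=
    ((hasDerivAt_cgf (mem_interior_integrableExpSet_of_forall hexp (-u))).comp u
      (hasDerivAt_neg u)).neg.congr_deriv (by ring)
  have hcont : Continuous fun u => tiltedMean ξ P (-u) :=
    (continuous_tiltedMean hexp).comp continuous_neg
  have hpos (u : ℝ) : 0 < tiltedMean ξ P (-u) := tiltedMean_pos hexp hξ0 hμpos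
  have hbound (u : ℝ) (hu : 0 ≤ u) :
      ‖tiltedMean ξ P (-u)‖ ≤ P[ξ] / P.real {ω | ξ ω = 0} := by
    rw [Real.norm_of_nonneg (hpos u).le]
    exact tiltedMean_le_integral_div_measureReal hexp hξ0 hp0 (neg_nonpos.2 hu)
  have hG0 : -cgf ξ P (-0) = 0 := by simp
  refine ⟨fun h hh => ⟨?_, ?_, ?_⟩, ?_⟩
  · rw [funext hΓ, hΓ' h]
    exact hasDerivAt_integral_comp_mul hφint hf0 hderiv hcont hG0 hbound hh
  · rw [hΓ' h]
    exact integral_mul_pos_of_integral_pos (ae_of_all _ hf0) hφpos (fun _ => hpos _)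
      (integrable_mul_comp_mul hφint hf0 hcont hbound hh.le)
  · rw [hΓ' h]
    exact integral_mul_comp_mul_le hφint hf0 hcont hbound hh.le
  · have hlim := tendsto_integral_mul_comp_mul hφint hf0 hcont hbound
    rw [neg_zero, tiltedMean_zero] at hlim
    rw [funext hΓ']
    exact hlim.mono_left (nhdsWithin_mono _ Set.Ioi_subset_Ici_self)

/-- `h ↦ Γ(h; φ)` is differentiable on `(0,∞)` with derivative
`Γ'(h; φ) = ∫ |φ(x)|² G'(h |φ(x)|²) dx`; moreover `0 < Γ'(h; φ) ≤ (μ/p) ‖φ‖₂²`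
for every `h > 0`, and `Γ'(h; φ) → μ ‖φ‖₂²` as `h → 0⁺`. -/
theorem Gamma_deriv_properties
    {Ω : Type*} [MeasurableSpace Ω] (P : Measure Ω) [IsProbabilityMeasure P]
    (ξ : Ω → ℝ) (hmeas : Measurable ξ)
    (hξ : ∀ᵐ ω ∂P, 0 ≤ ξ ω ∧ ξ ω ≤ 1)
    (p : ℝ) (hp : p = (P {ω | ξ ω = 0}).toReal) (hp0 : 0 < p) (hp1 : p < 1)
    (μ : ℝ) (hμ : μ = ∫ ω, ξ ω ∂P) (hμpos : 0 < μ)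
    (ν : ℝ) (hν : ν = Real.log (1 / p))
    (G : ℝ → ℝ) (hG : ∀ u, G u = -Real.log (∫ ω, Real.exp (-u * ξ ω) ∂P))
    (G' : ℝ → ℝ)
    (hG' : ∀ u, G' u = (∫ ω, ξ ω * Real.exp (-u * ξ ω) ∂P) /
        (∫ ω, Real.exp (-u * ξ ω) ∂P))
    (d : ℕ) (hd : 1 ≤ d)
    (φ : (Fin d → ℝ) → (Fin d → ℝ)) (hφmeas : Measurable φ)
    (hφint : Integrable (fun x => ∑ k, (φ x k) ^ 2))
    (hφpos : 0 < ∫ x, ∑ k, (φ x k) ^ 2)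
    (Γ : ℝ → ℝ) (hΓ : ∀ h, Γ h = ∫ x, G (h * ∑ k, (φ x k) ^ 2))
    (Γ' : ℝ → ℝ)
    (hΓ' : ∀ h, Γ' h = ∫ x, (∑ k, (φ x k) ^ 2) * G' (h * ∑ k, (φ x k) ^ 2)) :
    (∀ h, 0 < h → HasDerivAt Γ (Γ' h) h ∧ 0 < Γ' h ∧
        Γ' h ≤ μ / p * ∫ x, ∑ k, (φ x k) ^ 2) ∧
      Tendsto Γ' (𝓝[>] (0 : ℝ)) (𝓝 (μ * ∫ x, ∑ k, (φ x k) ^ 2)) :=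
  Gamma_deriv_properties_general P ξ hmeas hξ p hp hp0 μ hμ hμpos G hG G' hG' d φ hφint hφpos Γ hΓ
    Γ' hΓ'
end

section
/- The function h ↦ Γ(h; φ) − h Γ′(h; φ) is strictly increasing on (0,∞); it tends to 0 as h → 0⁺ and tends to D_∞ as h → ∞. Here Γ′(h; φ) = ∫_{ℝ^d} |φ(x)|² G′(h |φ(x)|²) dx with G′(u) = E[ξ exp(−u ξ)]/E[exp(−u ξ)]. -/
/-!
Write `G u = -cgf ξ (-u)`, so that `Γ h - h Γ' h = ∫ T (h |φ|²)` with `T u = G u - u G' u` the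
intercept at `0` of the tangent to `G` at `u`. The second derivative of the cumulant generating
function is the variance of `ξ` under an exponentially tilted law, which is positive because
`0 < P(ξ = 0) < 1` keeps `ξ` from being a.s. constant; so `G` is strictly concave and, by the mean
value theorem, `T` increases strictly on `[0, ∞)` from `T 0 = 0`. As `u → ∞`, `G u → -log p = ν`
by dominated convergence, and concavity gives `0 ≤ u G' u ≤ 2 (G u - G (u / 2)) → 0`, so
`T u → ν`. Hence `0 ≤ T ≤ ν`, and `h ↦ ∫ T (h |φ|²)` inherits strict monotonicity from `T` on
the support of `φ`, while both limits follow by dominated convergence with the dominating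
function `ν · 1_{φ ≠ 0}`.
-/

open MeasureTheory ProbabilityTheory Real Filter Topology Set Function

/-- For concave `F`, the concave Legendre transform of `F` at the slope `deriv F u`. -/
noncomputable def tangentIntercept (F : ℝ → ℝ) (u : ℝ) : ℝ := F u - u * deriv F u

section TangentIntercept

variable {F : ℝ → ℝ}

theorem strictMonoOn_tangentIntercept (hF : Differentiable ℝ F)
    (hF' : StrictAntiOn (deriv F) (Ici 0)) : StrictMonoOn (tangentIntercept F) (Ici 0) := by
  intro a (ha : 0 ≤ a) b hb hab
  obtain ⟨c, hc, hslope⟩ := exists_deriv_eq_slope F hab hF.continuous.continuousOn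
    hF.differentiableOn
  rw [eq_div_iff (sub_pos.2 hab).ne'] at hslope
  have hcb : deriv F b < deriv F c := hF' (mem_Ici.2 (ha.trans hc.1.le)) hb hc.2
  have hab' : deriv F b < deriv F a := hF' ha hb hab
  simp only [tangentIntercept]
  -- `T b - T a = (b - a) (F' c - F' b) + a (F' a - F' b)`
  nlinarith [mul_pos (sub_pos.2 hab) (sub_pos.2 hcb), mul_nonneg ha (sub_pos.2 hab').le]

theorem tendsto_mul_deriv_atTop {c : ℝ} (hF : Differentiable ℝ F)
    (hF' : AntitoneOn (deriv F) (Ici 0)) (hF'0 : ∀ u, 0 ≤ u → 0 ≤ deriv F u)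
    (hlim : Tendsto F atTop (𝓝 c)) : Tendsto (fun u => u * deriv F u) atTop (𝓝 0) := by
  have hchord : ∀ u, 0 < u → u * deriv F u ≤ 2 * (F u - F (u / 2)) := by
    intro u hu
    obtain ⟨v, hv, hslope⟩ := exists_deriv_eq_slope F (half_lt_self hu)
      hF.continuous.continuousOn hF.differentiableOn
    rw [eq_div_iff (by linarith)] at hslope
    have : deriv F u ≤ deriv F v :=
      hF' (mem_Ici.2 (by linarith [hv.1])) (mem_Ici.2 hu.le) hv.2.le
    nlinarith
  have hincr : Tendsto (fun u => 2 * (F u - F (u / 2))) atTop (𝓝 0) := by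
    simpa using (hlim.sub (hlim.comp (tendsto_id.atTop_div_const two_pos))).const_mul 2
  exact tendsto_of_tendsto_of_tendsto_of_le_of_le' tendsto_const_nhds hincr
    ((eventually_ge_atTop 0).mono fun u hu => mul_nonneg hu (hF'0 u hu))
    ((eventually_gt_atTop 0).mono hchord)

end TangentIntercept

structure IsSaturatingProfile (F : ℝ → ℝ) (c : ℝ) : Prop where
  differentiable : Differentiable ℝ F
  continuous_deriv : Continuous (deriv F)
  strictAntiOn_deriv : StrictAntiOn (deriv F) (Ici 0)
  deriv_nonneg : ∀ u, 0 ≤ u → 0 ≤ deriv F u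
  map_zero : F 0 = 0
  tendsto_atTop : Tendsto F atTop (𝓝 c)

namespace IsSaturatingProfile

variable {F : ℝ → ℝ} {c u : ℝ}

theorem monotoneOn (hF : IsSaturatingProfile F c) : MonotoneOn F (Ici 0) :=
  monotoneOn_of_deriv_nonneg (convex_Ici 0) hF.differentiable.continuous.continuousOn
    hF.differentiable.differentiableOn fun u hu => hF.deriv_nonneg u (interior_subset hu)

theorem mem_Icc (hF : IsSaturatingProfile F c) (hu : 0 ≤ u) : F u ∈ Icc 0 c :=
  ⟨hF.map_zero ▸ hF.monotoneOn self_mem_Ici hu hu,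
    ge_of_tendsto hF.tendsto_atTop <| (eventually_ge_atTop u).mono fun _ hv =>
      hF.monotoneOn hu (hu.trans hv) hv⟩

theorem abs_apply_le (hF : IsSaturatingProfile F c) (hu : 0 ≤ u) : |F u| ≤ c :=
  (abs_of_nonneg (hF.mem_Icc hu).1).trans_le (hF.mem_Icc hu).2

theorem continuous_tangentIntercept (hF : IsSaturatingProfile F c) :
    Continuous (tangentIntercept F) :=
  hF.differentiable.continuous.sub (continuous_id.mul hF.continuous_deriv)

theorem tangentIntercept_zero (hF : IsSaturatingProfile F c) : tangentIntercept F 0 = 0 := by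
  simp [tangentIntercept, hF.map_zero]

theorem strictMonoOn_tangentIntercept (hF : IsSaturatingProfile F c) :
    StrictMonoOn (tangentIntercept F) (Ici 0) :=
  _root_.strictMonoOn_tangentIntercept hF.differentiable hF.strictAntiOn_deriv

theorem tangentIntercept_mem_Icc (hF : IsSaturatingProfile F c) (hu : 0 ≤ u) :
    tangentIntercept F u ∈ Icc 0 (F u) :=
  ⟨hF.tangentIntercept_zero ▸ hF.strictMonoOn_tangentIntercept.monotoneOn self_mem_Ici hu hu,
    sub_le_self _ (mul_nonneg hu (hF.deriv_nonneg u hu))⟩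

theorem abs_tangentIntercept_le (hF : IsSaturatingProfile F c) (hu : 0 ≤ u) :
    |tangentIntercept F u| ≤ c :=
  (abs_of_nonneg (hF.tangentIntercept_mem_Icc hu).1).trans_le
    ((hF.tangentIntercept_mem_Icc hu).2.trans (hF.mem_Icc hu).2)

theorem abs_mul_deriv_le (hF : IsSaturatingProfile F c) (hu : 0 ≤ u) :
    |u * deriv F u| ≤ c := by
  have hT0 := (hF.tangentIntercept_mem_Icc hu).1
  have hFc := (hF.mem_Icc hu).2
  rw [tangentIntercept] at hT0
  rw [abs_of_nonneg (mul_nonneg hu (hF.deriv_nonneg u hu))]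
  linarith

theorem tendsto_tangentIntercept (hF : IsSaturatingProfile F c) :
    Tendsto (tangentIntercept F) atTop (𝓝 c) := by
  show Tendsto (fun u => F u - u * deriv F u) atTop (𝓝 c)
  simpa using hF.tendsto_atTop.sub (tendsto_mul_deriv_atTop hF.differentiable
    hF.strictAntiOn_deriv.antitoneOn hF.deriv_nonneg hF.tendsto_atTop)

end IsSaturatingProfile

section ScaledComposition

variable {α : Type*} {f : α → ℝ} {g : ℝ → ℝ} {c h : ℝ}

theorem norm_comp_mul_le_indicator (hf0 : 0 ≤ f) (hg0 : g 0 = 0)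
    (hgc : ∀ u, 0 ≤ u → |g u| ≤ c) (hh : 0 ≤ h) (x : α) :
    ‖g (h * f x)‖ ≤ (support f).indicator (fun _ => c) x := by
  by_cases hx : f x = 0
  · simp [hx, hg0]
  · rw [indicator_of_mem hx, norm_eq_abs]
    exact hgc _ (mul_nonneg hh (hf0 x))

variable [MeasurableSpace α] {μ : Measure α}

theorem integrable_indicator_support_const (hf : Measurable f) (hS : μ (support f) < ⊤) :
    Integrable ((support f).indicator fun _ => c) μ :=
  (integrable_indicator_iff (measurableSet_support hf)).2 (integrableOn_const hS.ne)

theorem integrable_comp_mul (hf : Measurable f) (hf0 : 0 ≤ f) (hS : μ (support f) < ⊤)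
    (hg : Measurable g) (hg0 : g 0 = 0) (hgc : ∀ u, 0 ≤ u → |g u| ≤ c) (hh : 0 ≤ h) :
    Integrable (fun x => g (h * f x)) μ :=
  (integrable_indicator_support_const hf hS).mono'
    (hg.comp (hf.const_mul h)).aestronglyMeasurable
    (ae_of_all _ (norm_comp_mul_le_indicator hf0 hg0 hgc hh))

theorem strictMonoOn_integral_comp_mul (hf : Measurable f) (hf0 : 0 ≤ f)
    (hS : μ (support f) < ⊤) (hSpos : μ (support f) ≠ 0) (hg : Measurable g) (hg0 : g 0 = 0)
    (hgc : ∀ u, 0 ≤ u → |g u| ≤ c) (hmono : StrictMonoOn g (Ici 0)) :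
    StrictMonoOn (fun h => ∫ x, g (h * f x) ∂μ) (Ici 0) := by
  intro a (ha : 0 ≤ a) b (hb : 0 ≤ b) hab
  have hlt : ∀ x, f x ≠ 0 → g (a * f x) < g (b * f x) := fun x hx =>
    hmono (mul_nonneg ha (hf0 x)) (mul_nonneg hb (hf0 x))
      (mul_lt_mul_of_pos_right hab ((hf0 x).lt_of_ne' hx))
  have hle : ∀ x, 0 ≤ g (b * f x) - g (a * f x) := fun x => by
    by_cases hx : f x = 0
    · simp [hx]
    · exact (sub_pos.2 (hlt x hx)).le
  have hint : ∀ h, 0 ≤ h → Integrable (fun x => g (h * f x)) μ := fun _ =>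
    integrable_comp_mul hf hf0 hS hg hg0 hgc
  rw [← sub_pos, ← integral_sub (hint b hb) (hint a ha),
    integral_pos_iff_support_of_nonneg hle ((hint b hb).sub (hint a ha))]
  exact hSpos.bot_lt.trans_le (measure_mono fun x hx => (sub_pos.2 (hlt x hx)).ne')

theorem tendsto_integral_comp_mul {l : Filter ℝ} [l.IsCountablyGenerated] {G : α → ℝ}
    (hf : Measurable f) (hf0 : 0 ≤ f) (hS : μ (support f) < ⊤) (hg : Measurable g)
    (hg0 : g 0 = 0) (hgc : ∀ u, 0 ≤ u → |g u| ≤ c) (hl : ∀ᶠ h in l, 0 ≤ h)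
    (hlim : ∀ x, Tendsto (fun h => g (h * f x)) l (𝓝 (G x))) :
    Tendsto (fun h => ∫ x, g (h * f x) ∂μ) l (𝓝 (∫ x, G x ∂μ)) :=
  tendsto_integral_filter_of_dominated_convergence _
    (Eventually.of_forall fun h => (hg.comp (hf.const_mul h)).aestronglyMeasurable)
    (hl.mono fun _ hh => ae_of_all _ (norm_comp_mul_le_indicator hf0 hg0 hgc hh))
    (integrable_indicator_support_const hf hS) (ae_of_all _ hlim)

theorem tendsto_integral_comp_mul_nhdsGT_zero (hf : Measurable f) (hf0 : 0 ≤ f)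
    (hS : μ (support f) < ⊤) (hg : Continuous g) (hg0 : g 0 = 0)
    (hgc : ∀ u, 0 ≤ u → |g u| ≤ c) :
    Tendsto (fun h => ∫ x, g (h * f x) ∂μ) (𝓝[>] (0 : ℝ)) (𝓝 0) := by
  have hlim : ∀ x, Tendsto (fun h => g (h * f x)) (𝓝 0) (𝓝 0) := fun x => by
    simpa [hg0, Function.comp_def] using
      (hg.tendsto 0).comp ((continuous_mul_const (f x)).tendsto' 0 0 (zero_mul _))
  simpa using tendsto_integral_comp_mul (l := 𝓝[>] 0) (G := fun _ => 0) hf hf0 hS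
    hg.measurable hg0 hgc (eventually_nhdsWithin_of_forall fun _ hh => le_of_lt hh)
    fun x => (hlim x).mono_left nhdsWithin_le_nhds

theorem tendsto_integral_comp_mul_atTop (hf : Measurable f) (hf0 : 0 ≤ f)
    (hS : μ (support f) < ⊤) (hg : Measurable g) (hg0 : g 0 = 0)
    (hgc : ∀ u, 0 ≤ u → |g u| ≤ c) (hlim : Tendsto g atTop (𝓝 c)) :
    Tendsto (fun h => ∫ x, g (h * f x) ∂μ) atTop (𝓝 (c * μ.real (support f))) := by
  have hconv := tendsto_integral_comp_mul (μ := μ) (G := (support f).indicator fun _ => c)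
    hf hf0 hS hg hg0 hgc (eventually_ge_atTop 0) fun x => ?_
  · rwa [integral_indicator_const _ (measurableSet_support hf), smul_eq_mul,
      mul_comm] at hconv
  by_cases hx : f x = 0
  · simp [hx, hg0]
  · rw [indicator_of_mem hx]
    exact hlim.comp (tendsto_id.atTop_mul_const ((hf0 x).lt_of_ne' hx))

theorem IsSaturatingProfile.integral_comp_mul_sub_mul_integral_deriv {F : ℝ → ℝ}
    (hF : IsSaturatingProfile F c) (hf : Measurable f) (hf0 : 0 ≤ f)
    (hS : μ (support f) < ⊤) (hh : 0 ≤ h) :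
    ∫ x, F (h * f x) ∂μ - h * ∫ x, f x * deriv F (h * f x) ∂μ
      = ∫ x, tangentIntercept F (h * f x) ∂μ := by
  have hFi := integrable_comp_mul hf hf0 hS hF.differentiable.continuous.measurable
    hF.map_zero (fun _ => hF.abs_apply_le) hh
  have hF'i := integrable_comp_mul (g := fun u => u * deriv F u) hf hf0 hS
    (continuous_id.mul hF.continuous_deriv).measurable (zero_mul _)
    (fun _ => hF.abs_mul_deriv_le) hh
  rw [← integral_const_mul, ← integral_sub hFi (hF'i.congr (ae_of_all _ fun x => by
    simp only; ring))]
  simp only [tangentIntercept, mul_assoc]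

end ScaledComposition

section LaplaceExponent

variable {Ω : Type*} [MeasurableSpace Ω] {P : Measure Ω} {X : Ω → ℝ}

noncomputable def laplaceExponent (X : Ω → ℝ) (P : Measure Ω) (u : ℝ) : ℝ := -cgf X P (-u)

theorem integrableExpSet_eq_univ [IsFiniteMeasure P] {a b : ℝ} (hX : AEMeasurable X P)
    (hab : ∀ᵐ ω ∂P, X ω ∈ Icc a b) : integrableExpSet X P = univ :=
  eq_univ_of_forall fun _ => integrable_exp_mul_of_mem_Icc hX hab

theorem analyticOnNhd_cgf_univ (h : integrableExpSet X P = univ) :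
    AnalyticOnNhd ℝ (cgf X P) univ := by
  simpa [h] using analyticOnNhd_cgf (X := X) (μ := P)

theorem hasDerivAt_laplaceExponent (h : integrableExpSet X P = univ) (u : ℝ) :
    HasDerivAt (laplaceExponent X P) (deriv (cgf X P) (-u)) u := by
  have hK := (analyticOnNhd_cgf_univ h (-u) trivial).differentiableAt.hasDerivAt
  unfold laplaceExponent
  simpa [Function.comp_def] using (hK.comp u (hasDerivAt_neg u)).fun_neg

theorem deriv_laplaceExponent (h : integrableExpSet X P = univ) (u : ℝ) :
    deriv (laplaceExponent X P) u = P[fun ω => X ω * exp (-u * X ω)] / mgf X P (-u) := by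
  rw [(hasDerivAt_laplaceExponent h u).deriv, deriv_cgf (by simp [h])]

theorem strictMono_deriv_cgf (h : integrableExpSet X P = univ)
    (hX : ∀ c, ¬ X =ᵐ[P] fun _ => c) : StrictMono (deriv (cgf X P)) := by
  refine strictMono_of_deriv_pos fun v => ?_
  have hv : v ∈ interior (integrableExpSet X P) := by simp [h]
  have hexp : Integrable (fun ω => exp (v * X ω)) P :=
    interior_subset (s := integrableExpSet X P) hv
  have hP : P ≠ 0 := fun hP => hX 0 (by simp [hP, EventuallyEq])
  -- `cgf''(v)` is the variance of `X` under the law tilted by `exp (v X)`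
  rw [show deriv (deriv (cgf X P)) v = iteratedDeriv 2 (cgf X P) v by
    rw [iteratedDeriv_succ, iteratedDeriv_one], iteratedDeriv_two_cgf_eq_integral hv]
  refine div_pos ?_ (mgf_pos' hP hexp)
  set m := deriv (cgf X P) v
  have hint : Integrable (fun ω => (X ω - m) ^ 2 * exp (v * X ω)) P := by
    have h2 := integrable_pow_mul_exp_of_mem_interior_integrableExpSet hv 2
    have h1 := integrable_pow_mul_exp_of_mem_interior_integrableExpSet hv 1
    refine ((h2.sub (h1.const_mul (2 * m))).add (hexp.const_mul (m ^ 2))).congr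
      (ae_of_all _ fun ω => ?_)
    simp only [Pi.add_apply, Pi.sub_apply]
    ring
  rw [integral_pos_iff_support_of_nonneg (fun ω => by positivity) hint]
  refine pos_iff_ne_zero.2 fun h0 => hX m (ae_iff.2 (measure_mono_null (fun ω hω => ?_) h0))
  exact mul_ne_zero (pow_ne_zero 2 (sub_ne_zero.2 hω)) (exp_pos _).ne'

theorem deriv_cgf_nonneg (h : integrableExpSet X P = univ) (hX : 0 ≤ᵐ[P] X) (v : ℝ) :
    0 ≤ deriv (cgf X P) v := by
  rw [deriv_cgf (by simp [h])]
  exact div_nonneg (integral_nonneg_of_ae (hX.mono fun ω hω => mul_nonneg hω (exp_pos _).le))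
    mgf_nonneg

theorem tendsto_mgf_atBot [IsFiniteMeasure P] (hXm : Measurable X) (hX : 0 ≤ᵐ[P] X) :
    Tendsto (mgf X P) atBot (𝓝 (P.real {ω | X ω = 0})) := by
  have hzero : MeasurableSet {ω | X ω = 0} := hXm (measurableSet_singleton 0)
  have hlim := tendsto_integral_filter_of_dominated_convergence (μ := P)
    (F := fun t ω => exp (t * X ω)) (f := {ω | X ω = 0}.indicator 1) (fun _ => 1)
    (Eventually.of_forall fun t => (hXm.const_mul t).exp.aestronglyMeasurable)
    ((eventually_le_atBot 0).mono fun t ht => hX.mono fun ω hω => by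
      rw [norm_of_nonneg (exp_pos _).le, exp_le_one_iff]
      exact mul_nonpos_of_nonpos_of_nonneg ht hω)
    (integrable_const 1) (hX.mono fun ω hω => ?_)
  · rwa [integral_indicator_one hzero] at hlim
  rcases hω.eq_or_lt with h0 | hpos
  · simp [← h0]
  · rw [indicator_of_notMem (show ω ∉ {ω | X ω = 0} from hpos.ne')]
    exact tendsto_exp_atBot.comp (tendsto_id.atBot_mul_const hpos)

theorem not_ae_eq_const_of_measureReal_eq_zero_mem_Ioo [IsProbabilityMeasure P]
    (hXm : Measurable X) (hp : P.real {ω | X ω = 0} ∈ Ioo 0 1) (c : ℝ) :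
    ¬ X =ᵐ[P] fun _ => c := by
  intro hc
  have hnull : P {ω | X ω ≠ c} = 0 := ae_iff.1 hc
  rcases eq_or_ne c 0 with rfl | hc0
  · have : P {ω | X ω = 0} = 1 :=
      (prob_compl_eq_zero_iff (hXm (measurableSet_singleton 0))).1 hnull
    exact hp.2.ne (by simp [measureReal_def, this])
  · have : P {ω | X ω = 0} = 0 :=
      measure_mono_null (fun ω (hω : X ω = 0) => show X ω ≠ c by rw [hω]; exact hc0.symm) hnull
    exact hp.1.ne' (by simp [measureReal_def, this])

theorem isSaturatingProfile_laplaceExponent [IsProbabilityMeasure P] {b : ℝ}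
    (hXm : Measurable X) (hX : ∀ᵐ ω ∂P, X ω ∈ Icc 0 b) (hnc : ∀ c, ¬ X =ᵐ[P] fun _ => c)
    (hp : 0 < P.real {ω | X ω = 0}) :
    IsSaturatingProfile (laplaceExponent X P) (-log (P.real {ω | X ω = 0})) := by
  have h := integrableExpSet_eq_univ hXm.aemeasurable hX
  have hX0 : 0 ≤ᵐ[P] X := hX.mono fun _ hω => hω.1
  have hderiv : deriv (laplaceExponent X P) = fun u => deriv (cgf X P) (-u) :=
    funext fun u => (hasDerivAt_laplaceExponent h u).deriv
  refine ⟨fun u => (hasDerivAt_laplaceExponent h u).differentiableAt, ?_, ?_,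
    fun u _ => hderiv ▸ deriv_cgf_nonneg h hX0 (-u), by simp [laplaceExponent], ?_⟩
  · rw [hderiv]
    exact (continuousOn_univ.1 (analyticOnNhd_cgf_univ h).deriv.continuousOn).comp
      continuous_neg
  · rw [hderiv]
    exact fun _ _ _ _ huv => strictMono_deriv_cgf h hnc (neg_lt_neg huv)
  · exact ((continuousAt_log hp.ne').tendsto.comp
      ((tendsto_mgf_atBot hXm hX0).comp tendsto_neg_atTop_atBot)).neg

end LaplaceExponent

theorem support_sum_sq {α ι : Type*} [Fintype ι] (φ : α → ι → ℝ) :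
    support (fun x => ∑ k, φ x k ^ 2) = support φ := by
  ext x
  simp [Finset.sum_eq_zero_iff_of_nonneg (fun k _ => sq_nonneg (φ x k)), funext_iff]

theorem Gamma_legendre_strict_mono_general
    {Ω : Type*} [MeasurableSpace Ω] (P : Measure Ω) [IsProbabilityMeasure P]
    (ξ : Ω → ℝ) (hmeas : Measurable ξ)
    (hξ : ∀ᵐ ω ∂P, 0 ≤ ξ ω ∧ ξ ω ≤ 1)
    (p : ℝ) (hp : p = (P {ω | ξ ω = 0}).toReal) (hp0 : 0 < p) (hp1 : p < 1)
    (ν : ℝ) (hν : ν = Real.log (1 / p))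
    (G : ℝ → ℝ) (hG : ∀ u, G u = -Real.log (∫ ω, Real.exp (-u * ξ ω) ∂P))
    (G' : ℝ → ℝ)
    (hG' : ∀ u, G' u = (∫ ω, ξ ω * Real.exp (-u * ξ ω) ∂P) /
        (∫ ω, Real.exp (-u * ξ ω) ∂P))
    (d : ℕ)
    (φ : (Fin d → ℝ) → (Fin d → ℝ)) (hφmeas : Measurable φ)
    (hφpos : 0 < ∫ x, ∑ k, (φ x k) ^ 2)
    (hsupp : volume {x | φ x ≠ 0} < ⊤)
    (Dinf : ℝ) (hDinf : Dinf = ν * (volume {x | φ x ≠ 0}).toReal)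
    (Γ : ℝ → ℝ) (hΓ : ∀ h, Γ h = ∫ x, G (h * ∑ k, (φ x k) ^ 2))
    (Γ' : ℝ → ℝ)
    (hΓ' : ∀ h, Γ' h = ∫ x, (∑ k, (φ x k) ^ 2) * G' (h * ∑ k, (φ x k) ^ 2)) :
    StrictMonoOn (fun h => Γ h - h * Γ' h) (Set.Ioi 0) ∧
      Tendsto (fun h => Γ h - h * Γ' h) (𝓝[>] (0 : ℝ)) (𝓝 0) ∧
      Tendsto (fun h => Γ h - h * Γ' h) atTop (𝓝 Dinf) := by
  have hGL : G = laplaceExponent ξ P := funext hG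
  have hG'L : G' = deriv G := funext fun u => by
    rw [hG', hGL, deriv_laplaceExponent (integrableExpSet_eq_univ hmeas.aemeasurable hξ)]; rfl
  have hG_prof : IsSaturatingProfile G ν := by
    subst hp hν
    rw [hGL, one_div, log_inv]
    exact isSaturatingProfile_laplaceExponent hmeas hξ
      (not_ae_eq_const_of_measureReal_eq_zero_mem_Ioo hmeas ⟨hp0, hp1⟩) hp0
  set f : (Fin d → ℝ) → ℝ := fun x => ∑ k, φ x k ^ 2
  have hf : Measurable f := by fun_prop
  have hf0 : 0 ≤ f := fun x => Finset.sum_nonneg fun k _ => sq_nonneg (φ x k)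
  have hS : volume (support f) < ⊤ := support_sum_sq φ ▸ hsupp
  have hSpos : volume (support f) ≠ 0 := fun h0 =>
    hφpos.ne' (integral_eq_zero_of_ae ((Measure.measure_support_eq_zero_iff _).1 h0))
  have hΓT : ∀ h, 0 ≤ h → Γ h - h * Γ' h = ∫ x, tangentIntercept G (h * f x) := fun h hh => by
    rw [hΓ, hΓ', hG'L, hG_prof.integral_comp_mul_sub_mul_integral_deriv hf hf0 hS hh]
  have hT := hG_prof.continuous_tangentIntercept
  have hT0 := hG_prof.tangentIntercept_zero
  have hTν : ∀ u, 0 ≤ u → |tangentIntercept G u| ≤ ν := fun _ => hG_prof.abs_tangentIntercept_le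
  refine ⟨?_, ?_, ?_⟩
  · exact ((strictMonoOn_integral_comp_mul hf hf0 hS hSpos hT.measurable hT0 hTν
      hG_prof.strictMonoOn_tangentIntercept).mono Ioi_subset_Ici_self).congr
      fun h hh => (hΓT h (le_of_lt hh)).symm
  · exact (tendsto_integral_comp_mul_nhdsGT_zero hf hf0 hS hT hT0 hTν).congr'
      (eventually_nhdsWithin_of_forall fun h hh => (hΓT h (le_of_lt hh)).symm)
  · rw [hDinf, show {x | φ x ≠ 0} = support f from (support_sum_sq φ).symm]
    exact (tendsto_integral_comp_mul_atTop hf hf0 hS hT.measurable hT0 hTν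
      hG_prof.tendsto_tangentIntercept).congr'
      ((eventually_ge_atTop 0).mono fun h hh => (hΓT h hh).symm)

/-- `h ↦ Γ(h; φ) - h Γ'(h; φ)` is strictly increasing on `(0,∞)`, tends to `0`
as `h → 0⁺` and tends to `D_∞` as `h → ∞`. -/
theorem Gamma_legendre_strict_mono
    {Ω : Type*} [MeasurableSpace Ω] (P : Measure Ω) [IsProbabilityMeasure P]
    (ξ : Ω → ℝ) (hmeas : Measurable ξ)
    (hξ : ∀ᵐ ω ∂P, 0 ≤ ξ ω ∧ ξ ω ≤ 1)
    (p : ℝ) (hp : p = (P {ω | ξ ω = 0}).toReal) (hp0 : 0 < p) (hp1 : p < 1)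
    (μ : ℝ) (hμ : μ = ∫ ω, ξ ω ∂P) (hμpos : 0 < μ)
    (ν : ℝ) (hν : ν = Real.log (1 / p))
    (G : ℝ → ℝ) (hG : ∀ u, G u = -Real.log (∫ ω, Real.exp (-u * ξ ω) ∂P))
    (G' : ℝ → ℝ)
    (hG' : ∀ u, G' u = (∫ ω, ξ ω * Real.exp (-u * ξ ω) ∂P) /
        (∫ ω, Real.exp (-u * ξ ω) ∂P))
    (d : ℕ) (hd : 1 ≤ d)
    (φ : (Fin d → ℝ) → (Fin d → ℝ)) (hφmeas : Measurable φ)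
    (hφint : Integrable (fun x => ∑ k, (φ x k) ^ 2))
    (hφpos : 0 < ∫ x, ∑ k, (φ x k) ^ 2)
    (hsupp : volume {x | φ x ≠ 0} < ⊤)
    (Dinf : ℝ) (hDinf : Dinf = ν * (volume {x | φ x ≠ 0}).toReal)
    (Γ : ℝ → ℝ) (hΓ : ∀ h, Γ h = ∫ x, G (h * ∑ k, (φ x k) ^ 2))
    (Γ' : ℝ → ℝ)
    (hΓ' : ∀ h, Γ' h = ∫ x, (∑ k, (φ x k) ^ 2) * G' (h * ∑ k, (φ x k) ^ 2)) :
    StrictMonoOn (fun h => Γ h - h * Γ' h) (Set.Ioi 0) ∧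
      Tendsto (fun h => Γ h - h * Γ' h) (𝓝[>] (0 : ℝ)) (𝓝 0) ∧
      Tendsto (fun h => Γ h - h * Γ' h) atTop (𝓝 Dinf) :=
  Gamma_legendre_strict_mono_general P ξ hmeas hξ p hp hp0 hp1 ν hν G hG G' hG' d φ hφmeas hφpos
    hsupp Dinf hDinf Γ hΓ Γ' hΓ'
end
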